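/- arXiv:1003.3685 — 9 statements merged into one kernel-verified Lean document; each statement's English description precedes it below -/
import Mathlib

section
/- Let S : ℕ → ℕ be defined by S(0) = 1 and, for k ≥ 1, S(k) = k + 1 + ∑_{i=1}^{k} i·S(k−i). Then for every k ≥ 1, S(k) ≡ 1 + ∑_{j=0}^{k−2} S(j) (mod 2). -/
open Finset

theorem sum_Icc_one_eq_sum_range_sub {M : Type*} [AddCommMonoid M] (g : ℕ → ℕ → M) (n : ℕ) :
    ∑ i ∈ Icc 1 n, g i (n - i) = ∑ j ∈ range n, g (n - j) j := by
  rw [← Ico_add_one_right_eq_Icc, sum_Ico_eq_sum_range, add_tsub_cancel_right,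
    ← sum_range_reflect]
  refine sum_congr rfl fun j hj => ?_
  have hj : j < n := mem_range.mp hj
  congr 1 <;> omega

theorem sum_range_succ_sub_mul (f : ℕ → ℕ) (n : ℕ) :
    ∑ j ∈ range (n + 1), (n + 1 - j) * f j
      = ∑ j ∈ range n, (n - j) * f j + ∑ j ∈ range (n + 1), f j := by
  have hsplit : ∀ j ∈ range (n + 1), (n + 1 - j) * f j = (n - j) * f j + f j := by
    intro j hj
    rw [Nat.sub_add_comm (Nat.lt_succ_iff.mp (mem_range.mp hj)), add_one_mul]
  rw [sum_congr rfl hsplit, sum_add_distrib, sum_range_succ (fun j => (n - j) * f j), Nat.sub_self,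
    zero_mul, add_zero]

section

variable (S : ℕ → ℕ) (hS : ∀ k, 1 ≤ k → S k = k + 1 + ∑ i ∈ Icc 1 k, i * S (k - i))
include hS

theorem eq_add_one_add_sum_range_sub_mul (k : ℕ) (hk : 1 ≤ k) :
    S k = k + 1 + ∑ j ∈ range k, (k - j) * S j := by
  rw [hS k hk, sum_Icc_one_eq_sum_range_sub (fun i j => i * S j)]

/-- Differencing the recurrence removes the weights `k - j`. -/
theorem succ_eq_two_mul_add_sum_range (k : ℕ) (hk : 1 ≤ k) :
    S (k + 1) = 2 * S k + 1 + ∑ j ∈ range k, S j := by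
  rw [eq_add_one_add_sum_range_sub_mul S hS (k + 1) (by omega), sum_range_succ_sub_mul,
    sum_range_succ, eq_add_one_add_sum_range_sub_mul S hS k hk]
  ring

end

theorem stmt_0 (S : ℕ → ℕ) (hS0 : S 0 = 1)
    (hS : ∀ k, 1 ≤ k → S k = k + 1 + ∑ i ∈ Finset.Icc 1 k, i * S (k - i)) :
    ∀ k, 1 ≤ k → S k ≡ 1 + ∑ j ∈ Finset.range (k - 1), S j [MOD 2] := by
  rintro (_ | _ | m) hk
  · omega
  · have hS1 : S 1 = 2 + S 0 := by simpa using hS 1 le_rfl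
    simp [Nat.ModEq, hS1, hS0]
  · rw [show m + 2 - 1 = m + 1 from rfl, succ_eq_two_mul_add_sum_range S hS (m + 1) (by omega),
      Nat.ModEq]
    omega
end

section
/- Let S : ℕ → ℕ be defined by S(0) = 1 and, for k ≥ 1, S(k) = k + 1 + ∑_{i=1}^{k} i·S(k−i). Then for every k ≥ 3, S(k) ≡ S(k−3) (mod 2). -/
/-!
Subtracting the recurrence at `k` from the one at `k + 1` gives
`S (k + 1) = S k + 1 + ∑_{j ≤ k} S j`, and differencing once more eliminates the sum:
`S (k + 2) + S k = 3 S (k + 1)`. Modulo 2 this is the Fibonacci recurrence, whose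
residues have period 3.
-/

open Finset

theorem Finset.sum_Icc_nsmul_tsub_succ {M : Type*} [AddCommMonoid M] (f : ℕ → M) (n : ℕ) :
    ∑ i ∈ Icc 1 (n + 1), i • f (n + 1 - i) =
      ∑ i ∈ Icc 1 n, i • f (n - i) + ∑ j ∈ range (n + 1), f j := by
  have sum_Icc_one (m : ℕ) (g : ℕ → M) : ∑ i ∈ Icc 1 m, g i = ∑ k ∈ range m, g (k + 1) := by
    rw [← Ico_add_one_right_eq_Icc, sum_Ico_eq_sum_range]
    simp only [add_tsub_cancel_right, add_comm]
  have split (k : ℕ) : (k + 1) • f (n + 1 - (k + 1)) = k • f (n - k) + f (n - k) := by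
    rw [Nat.add_sub_add_right, add_smul, one_smul]
  rw [sum_Icc_one, sum_Icc_one, ← sum_range_reflect f, add_tsub_cancel_right]
  simp only [split, sum_add_distrib]
  rw [sum_range_succ' (fun k => k • f (n - k)), zero_smul, add_zero]

theorem Nat.modEq_two_add_three_of_add_add_eq_three_mul {u : ℕ → ℕ}
    (hu : ∀ k, u (k + 2) + u k = 3 * u (k + 1)) (k : ℕ) : u (k + 3) ≡ u k [MOD 2] := by
  have h₀ := hu k
  have h₁ : u (k + 3) + u (k + 1) = 3 * u (k + 2) := hu (k + 1)
  unfold Nat.ModEq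
  omega

namespace SLoopCount

variable {S : ℕ → ℕ} (hS0 : S 0 = 1)
  (hS : ∀ k, 1 ≤ k → S k = k + 1 + ∑ i ∈ Icc 1 k, i * S (k - i))
include hS0 hS

theorem eq_add_sum_Icc_mul (k : ℕ) : S k = k + 1 + ∑ i ∈ Icc 1 k, i * S (k - i) := by
  rcases k.eq_zero_or_pos with rfl | hk
  · simp [hS0]
  · exact hS k hk

theorem succ_eq_add_sum_range (k : ℕ) : S (k + 1) = S k + 1 + ∑ j ∈ range (k + 1), S j := by
  have hk := eq_add_sum_Icc_mul hS0 hS k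
  have hk₁ := eq_add_sum_Icc_mul hS0 hS (k + 1)
  simp only [← smul_eq_mul, sum_Icc_nsmul_tsub_succ] at hk hk₁
  omega

theorem add_add_eq_three_mul (k : ℕ) : S (k + 2) + S k = 3 * S (k + 1) := by
  have hk := succ_eq_add_sum_range hS0 hS k
  have hk₁ : S (k + 2) = S (k + 1) + 1 + ∑ j ∈ range (k + 2), S j :=
    succ_eq_add_sum_range hS0 hS (k + 1)
  rw [sum_range_succ] at hk₁
  omega

end SLoopCount

theorem stmt_1 (S : ℕ → ℕ) (hS0 : S 0 = 1)
    (hS : ∀ k, 1 ≤ k → S k = k + 1 + ∑ i ∈ Finset.Icc 1 k, i * S (k - i)) :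
    ∀ k, 3 ≤ k → S k ≡ S (k - 3) [MOD 2] := by
  intro k hk
  obtain ⟨m, rfl⟩ := Nat.exists_eq_add_of_le' hk
  rw [Nat.add_sub_cancel]
  exact Nat.modEq_two_add_three_of_add_add_eq_three_mul
    (SLoopCount.add_add_eq_three_mul hS0 hS) m
end

section
/- Let N : ℕ → ℕ be defined by N(0) = 1 and, for k ≥ 1, N(k) = 1 + ∑_{i=1}^{k} i·N(k−i). Then for every k ≥ 1, N(k) ≡ ∑_{j=0}^{k−2} N(j) (mod 2). -/
/-!
Reindexing by `j = k - i` turns the recurrence into `N k = 1 + ∑_{j<k} (k - j) N j`, which also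
holds at `k = 0`. Taking the difference of two consecutive instances gives
`N (k + 1) = N k + ∑_{j ≤ k} N j = 2 N k + ∑_{j<k} N j`, and the term `2 N k` vanishes mod 2.
-/

open Finset

section WeightedSums

variable {M : Type*} [AddCommMonoid M] (f : ℕ → M) (k : ℕ)

theorem sum_Icc_smul_sub_eq_sum_range :
    ∑ i ∈ Icc 1 k, i • f (k - i) = ∑ j ∈ range k, (k - j) • f j := by
  refine sum_nbij' (k - ·) (k - ·) ?_ ?_ ?_ ?_ ?_ <;> intro i hi <;>
    simp only [mem_Icc, mem_range] at hi ⊢ <;> try omega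
  rw [Nat.sub_sub_self hi.2]

theorem sum_range_succ_sub_smul :
    ∑ j ∈ range (k + 1), (k + 1 - j) • f j
      = ∑ j ∈ range k, (k - j) • f j + ∑ j ∈ range (k + 1), f j := by
  have hlast : ∑ j ∈ range (k + 1), (k - j) • f j = ∑ j ∈ range k, (k - j) • f j := by
    rw [sum_range_succ, Nat.sub_self, zero_smul, add_zero]
  rw [← hlast, ← sum_add_distrib]
  refine sum_congr rfl fun j hj => ?_
  rw [Nat.sub_add_comm (mem_range_succ_iff.mp hj), succ_nsmul]

end WeightedSums

section Recurrence

variable {N : ℕ → ℕ} (hN0 : N 0 = 1)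
  (hN : ∀ k, 1 ≤ k → N k = 1 + ∑ i ∈ Icc 1 k, i * N (k - i))
include hN0 hN

theorem eq_one_add_sum_range_sub_mul (k : ℕ) :
    N k = 1 + ∑ j ∈ range k, (k - j) * N j := by
  rcases k.eq_zero_or_pos with rfl | hk
  · simpa using hN0
  · rw [hN k hk]
    simpa only [smul_eq_mul] using congrArg (1 + ·) (sum_Icc_smul_sub_eq_sum_range N k)

theorem eq_two_mul_add_sum_range (k : ℕ) :
    N (k + 1) = 2 * N k + ∑ j ∈ range k, N j := by
  have hsucc := eq_one_add_sum_range_sub_mul hN0 hN (k + 1)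
  have hk := eq_one_add_sum_range_sub_mul hN0 hN k
  simp only [← smul_eq_mul, sum_range_succ_sub_smul] at hsucc hk
  rw [hsucc, sum_range_succ, ← add_assoc, ← hk]
  ring

end Recurrence

theorem stmt_3 (N : ℕ → ℕ) (hN0 : N 0 = 1)
    (hN : ∀ k, 1 ≤ k → N k = 1 + ∑ i ∈ Finset.Icc 1 k, i * N (k - i)) :
    ∀ k, 1 ≤ k → N k ≡ ∑ j ∈ Finset.range (k - 1), N j [MOD 2] := by
  intro k hk
  obtain ⟨m, rfl⟩ := Nat.exists_eq_add_of_le' hk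
  rw [eq_two_mul_add_sum_range hN0 hN m, Nat.add_sub_cancel]
  exact (Nat.modEq_modulus_mul_add_iff.mpr rfl).symm
end

section
/- Let N : ℕ → ℕ be defined by N(0) = 1 and, for k ≥ 1, N(k) = 1 + ∑_{i=1}^{k} i·N(k−i). Then for every k ≥ 3, N(k) ≡ N(k−3) (mod 2). -/
/-!
After reindexing, `N k = 1 + ∑_{j<k} (k - j) N(j)` for every `k` (also `k = 0`). The second
difference in `k` of the weights `k - j` (truncated at `0`) is the indicator of `j = k + 1`, so
`N (k + 2) - 2 N (k + 1) + N k = N (k + 1)`, i.e. `N (k + 2) + N k = 3 N (k + 1)`. Eliminating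
`N (k + 2)` from two consecutive instances gives `N (k + 3) + 3 N k = 8 N (k + 1)`, whence
`N (k + 3) ≡ N k` modulo `2`.
-/

open Finset

section WeightedSums

variable {M : Type*} [AddCommMonoid M]

theorem sum_Icc_one_smul_tsub_eq_sum_range (f : ℕ → M) (k : ℕ) :
    ∑ i ∈ Icc 1 k, i • f (k - i) = ∑ j ∈ range k, (k - j) • f j := by
  refine sum_nbij' (fun i ↦ k - i) (fun j ↦ k - j) ?_ ?_ ?_ ?_ ?_ <;>
    intro i hi <;> simp only [mem_Icc, mem_range] at hi
  · simp only [mem_range]; omega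
  · simp only [mem_Icc]; omega
  · omega
  · omega
  · rw [Nat.sub_sub_self hi.2]

theorem sum_range_succ_tsub_smul (a : ℕ → M) (k : ℕ) :
    ∑ j ∈ range (k + 1), (k + 1 - j) • a j
      = ∑ j ∈ range k, (k - j) • a j + ∑ j ∈ range (k + 1), a j := by
  have hsplit : ∑ j ∈ range k, (k + 1 - j) • a j
      = ∑ j ∈ range k, (k - j) • a j + ∑ j ∈ range k, a j := by
    rw [← sum_add_distrib]
    refine sum_congr rfl fun j hj ↦ ?_
    rw [Nat.sub_add_comm (mem_range.1 hj).le, succ_nsmul]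
  rw [sum_range_succ, hsplit, sum_range_succ, Nat.add_sub_cancel_left, one_nsmul, add_assoc]

end WeightedSums

theorem Nat.modEq_two_of_add_eq_three_mul (a : ℕ → ℕ)
    (h : ∀ k, a (k + 2) + a k = 3 * a (k + 1)) (k : ℕ) : a (k + 3) ≡ a k [MOD 2] := by
  have h₀ : a (k + 2) + a k = 3 * a (k + 1) := h k
  have h₁ : a (k + 3) + a (k + 1) = 3 * a (k + 2) := h (k + 1)
  have : a (k + 3) + 3 * a k = 8 * a (k + 1) := by omega
  unfold Nat.ModEq
  omega

namespace LoopCount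

variable {N : ℕ → ℕ} (hN0 : N 0 = 1)
  (hN : ∀ k, 1 ≤ k → N k = 1 + ∑ i ∈ Icc 1 k, i * N (k - i))
include hN0 hN

theorem eq_one_add_sum_range_tsub_mul (k : ℕ) :
    N k = 1 + ∑ j ∈ range k, (k - j) * N j := by
  rcases Nat.eq_zero_or_pos k with rfl | hk
  · simp [hN0]
  · have := sum_Icc_one_smul_tsub_eq_sum_range N k
    simp only [smul_eq_mul] at this
    rw [hN k hk, this]

theorem add_eq_three_mul (k : ℕ) : N (k + 2) + N k = 3 * N (k + 1) := by
  have h₀ := eq_one_add_sum_range_tsub_mul hN0 hN k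
  have h₁ := eq_one_add_sum_range_tsub_mul hN0 hN (k + 1)
  have h₂ := eq_one_add_sum_range_tsub_mul hN0 hN (k + 2)
  simp only [← smul_eq_mul, sum_range_succ_tsub_smul] at h₀ h₁ h₂
  rw [sum_range_succ _ (k + 1)] at h₂
  omega

end LoopCount

theorem stmt_4 (N : ℕ → ℕ) (hN0 : N 0 = 1)
    (hN : ∀ k, 1 ≤ k → N k = 1 + ∑ i ∈ Finset.Icc 1 k, i * N (k - i)) :
    ∀ k, 3 ≤ k → N k ≡ N (k - 3) [MOD 2] := by
  intro k hk
  obtain ⟨m, rfl⟩ : ∃ m, k = m + 3 := ⟨k - 3, by omega⟩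
  simpa using Nat.modEq_two_of_add_eq_three_mul N (LoopCount.add_eq_three_mul hN0 hN) m
end

section
/- Let N : ℕ → ℕ be defined by N(0) = 1 and, for k ≥ 1, N(k) = 1 + ∑_{i=1}^{k} i·N(k−i). Then N(k) is odd if and only if k mod 3 ≠ 1. -/
/-!
Subtracting the recurrence at `k` from the one at `k + 1` gives
`N (k + 1) = N k + S (k + 1)` with `S n = ∑_{m < n} N m`, and `S (k + 1) = S k + N k`.
Modulo 2 the pair `(N k, S k)` therefore evolves by `(n, s) ↦ (s, n + s)`, which from `(1, 0)`
runs through the 3-cycle `(1, 0) → (0, 1) → (1, 1)`.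
-/

open Finset

theorem sum_Icc_one_smul_eq_sum_range {M : Type*} [AddCommMonoid M] (g : ℕ → M) (n : ℕ) :
    ∑ i ∈ Icc 1 n, i • g i = ∑ i ∈ range (n + 1), i • g i := by
  rw [range_eq_Ico, sum_eq_sum_Ico_succ_bot n.succ_pos, zero_smul, zero_add, zero_add,
    Nat.succ_eq_add_one, Ico_add_one_right_eq_Icc]

theorem sum_Icc_smul_sub_succ {M : Type*} [AddCommMonoid M] (f : ℕ → M) (k : ℕ) :
    ∑ i ∈ Icc 1 (k + 1), i • f (k + 1 - i) =
      ∑ i ∈ Icc 1 k, i • f (k - i) + ∑ m ∈ range (k + 1), f m := by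
  simp only [sum_Icc_one_smul_eq_sum_range (fun i => f (_ - i))]
  rw [sum_range_succ', zero_smul, add_zero, ← sum_range_reflect f (k + 1), ← sum_add_distrib]
  refine sum_congr rfl fun i _ => ?_
  rw [Nat.add_sub_add_right, add_smul, one_smul, Nat.add_sub_cancel]

theorem odd_iff_mod_three_of_add_sum_range {N : ℕ → ℕ} (h0 : Odd (N 0))
    (hrec : ∀ k, N (k + 1) = N k + ∑ m ∈ range (k + 1), N m) (k : ℕ) :
    (Odd (N k) ↔ k % 3 ≠ 1) ∧ (Even (∑ m ∈ range k, N m) ↔ k % 3 = 0) := by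
  simp only [Nat.odd_iff, Nat.even_iff] at h0 ⊢
  induction k with
  | zero => simpa using h0
  | succ k ih =>
    rw [hrec, sum_range_succ]
    omega

theorem stmt_5 (N : ℕ → ℕ) (hN0 : N 0 = 1)
    (hN : ∀ k, 1 ≤ k → N k = 1 + ∑ i ∈ Finset.Icc 1 k, i * N (k - i)) :
    ∀ k, Odd (N k) ↔ k % 3 ≠ 1 := by
  have hrec : ∀ k, N (k + 1) = N k + ∑ m ∈ range (k + 1), N m := by
    intro k
    rcases k.eq_zero_or_pos with rfl | hk
    · simp [hN, hN0]
    · simp only [hN _ hk, hN _ k.succ_pos, ← smul_eq_mul, sum_Icc_smul_sub_succ, add_assoc]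
  exact fun k => (odd_iff_mod_three_of_add_sum_range (hN0 ▸ odd_one) hrec k).1
end

section
/- Let S, N : ℕ → ℕ be defined by S(0) = 1, S(k) = k + 1 + ∑_{i=1}^{k} i·S(k−i) for k ≥ 1, and N(0) = 1, N(k) = 1 + ∑_{i=1}^{k} i·N(k−i) for k ≥ 1. Let p ≥ 3 be an odd natural number, let k_S = ⌊(p−3)/4⌋ and k_N = ⌊(p−1)/4⌋. Then S(k_S) + N(k_N) is even if and only if p ≡ 3 (mod 12) or p ≡ 9 (mod 12). -/
/-!
Both sequences satisfy `f (k + 1) = f k + d + ∑_{j ≤ k} f j` (with `d = 1` for `S`, `d = 0` for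
`N`), since raising `k` by one adds one copy of every earlier term to the convolution sum.
Differencing once more gives `f (k + 2) + f k = 3 f (k + 1)`, so modulo 2 the parities follow the
Fibonacci rule and are periodic of period 3: `S` is even exactly at `k ≡ 2`, `N` exactly at
`k ≡ 1 (mod 3)`. Writing odd `p = 4q + r` with `r ∈ {1, 3}`, the two parities agree exactly when
`p ≡ 3, 9 (mod 12)`.
-/

open Finset

theorem sum_Icc_one_mul_eq_sum_antidiagonal (f : ℕ → ℕ) (k : ℕ) :
    ∑ i ∈ Icc 1 k, i * f (k - i) = ∑ x ∈ antidiagonal k, x.1 * f x.2 := by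
  rw [Nat.sum_antidiagonal_eq_sum_range_succ (fun i j => i * f j), Nat.range_succ_eq_Icc_zero,
    ← insert_Icc_add_one_left_eq_Icc (Nat.zero_le k), sum_insert (by simp)]
  simp

theorem sum_antidiagonal_succ_fst_mul (f : ℕ → ℕ) (k : ℕ) :
    ∑ x ∈ antidiagonal (k + 1), x.1 * f x.2
      = ∑ x ∈ antidiagonal k, x.1 * f x.2 + ∑ j ∈ range (k + 1), f j := by
  have h : ∑ x ∈ antidiagonal k, f x.2 = ∑ j ∈ range (k + 1), f j := by
    rw [← Nat.sum_antidiagonal_swap]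
    exact Nat.sum_antidiagonal_eq_sum_range_succ (fun i _ => f i) k
  rw [Nat.sum_antidiagonal_succ]
  simp [add_mul, sum_add_distrib, h]

theorem sum_Icc_one_mul_succ (f : ℕ → ℕ) (k : ℕ) :
    ∑ i ∈ Icc 1 (k + 1), i * f (k + 1 - i)
      = ∑ i ∈ Icc 1 k, i * f (k - i) + ∑ j ∈ range (k + 1), f j := by
  simp only [sum_Icc_one_mul_eq_sum_antidiagonal, sum_antidiagonal_succ_fst_mul]

theorem add_add_eq_three_mul_of_eq_add_sum {f g : ℕ → ℕ} {d : ℕ} (hg : ∀ k, g (k + 1) = g k + d)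
    (hf : ∀ k, f k = g k + ∑ i ∈ Icc 1 k, i * f (k - i)) (k : ℕ) :
    f (k + 2) + f k = 3 * f (k + 1) := by
  have step : ∀ m, f (m + 1) = f m + d + ∑ j ∈ range (m + 1), f j := by
    intro m
    conv_lhs => rw [hf]
    rw [sum_Icc_one_mul_succ, hf m, hg]
    ring
  have h₁ := step k
  have h₂ : f (k + 2) = f (k + 1) + d + ∑ j ∈ range (k + 2), f j := step (k + 1)
  rw [sum_range_succ] at h₂
  omega

theorem even_iff_even_mod_three_of_add_add_eq_three_mul {f : ℕ → ℕ}
    (hf : ∀ k, f (k + 2) + f k = 3 * f (k + 1)) (k : ℕ) :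
    Even (f k) ↔ Even (f (k % 3)) := by
  have periodic : Function.Periodic (fun k => f k % 2) 3 := by
    intro k
    have h₁ : f (k + 2) + f k = 3 * f (k + 1) := hf k
    have h₂ : f (k + 3) + f (k + 1) = 3 * f (k + 2) := hf (k + 1)
    dsimp only
    omega
  simp only [Nat.even_iff, periodic.map_mod_nat k]

theorem even_S_iff {S : ℕ → ℕ} (hS0 : S 0 = 1)
    (hS : ∀ k, 1 ≤ k → S k = k + 1 + ∑ i ∈ Icc 1 k, i * S (k - i)) (k : ℕ) :
    Even (S k) ↔ k % 3 = 2 := by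
  have hS' : ∀ k, S k = k + 1 + ∑ i ∈ Icc 1 k, i * S (k - i) := by
    rintro (_ | k)
    · simpa using hS0
    · exact hS _ k.succ_pos
  have hrec := add_add_eq_three_mul_of_eq_add_sum (fun _ => rfl) hS'
  have hS1 : S 1 = 3 := by simp [hS 1 le_rfl, hS0]
  have hS2 : S 2 = 8 := by have : S 2 + S 0 = 3 * S 1 := hrec 0; omega
  rw [even_iff_even_mod_three_of_add_add_eq_three_mul hrec]
  have : k % 3 < 3 := Nat.mod_lt k (by norm_num)
  interval_cases k % 3 <;> simp [Nat.even_iff, hS0, hS1, hS2]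

theorem even_N_iff {N : ℕ → ℕ} (hN0 : N 0 = 1)
    (hN : ∀ k, 1 ≤ k → N k = 1 + ∑ i ∈ Icc 1 k, i * N (k - i)) (k : ℕ) :
    Even (N k) ↔ k % 3 = 1 := by
  have hN' : ∀ k, N k = 1 + ∑ i ∈ Icc 1 k, i * N (k - i) := by
    rintro (_ | k)
    · simpa using hN0
    · exact hN _ k.succ_pos
  have hrec := add_add_eq_three_mul_of_eq_add_sum (g := fun _ => 1) (d := 0) (fun _ => rfl) hN'
  have hN1 : N 1 = 2 := by simp [hN 1 le_rfl, hN0]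
  have hN2 : N 2 = 5 := by have : N 2 + N 0 = 3 * N 1 := hrec 0; omega
  rw [even_iff_even_mod_three_of_add_add_eq_three_mul hrec]
  have : k % 3 < 3 := Nat.mod_lt k (by norm_num)
  interval_cases k % 3 <;> simp [Nat.even_iff, hN0, hN1, hN2]

theorem stmt_10 (S N : ℕ → ℕ) (hS0 : S 0 = 1)
    (hS : ∀ k, 1 ≤ k → S k = k + 1 + ∑ i ∈ Finset.Icc 1 k, i * S (k - i))
    (hN0 : N 0 = 1)
    (hN : ∀ k, 1 ≤ k → N k = 1 + ∑ i ∈ Finset.Icc 1 k, i * N (k - i))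
    (p : ℕ) (hp : 3 ≤ p) (hodd : Odd p) :
    Even (S ((p - 3) / 4) + N ((p - 1) / 4)) ↔ p % 12 = 3 ∨ p % 12 = 9 := by
  rw [Nat.even_add, even_S_iff hS0 hS, even_N_iff hN0 hN]
  rw [Nat.odd_iff] at hodd
  omega
end

section
/- Call a finite subset P of {1, 2, ..., n} parity-alternating if, when its elements are listed in increasing order p_1 < p_2 < ... < p_m, one has p_j ≡ j (mod 2) for every j (so p_1 is odd, p_2 is even, and so on). For each k ≥ 0, let T(k) be the number of parity-alternating subsets of {1, 2, ..., 2k+1} of odd cardinality. Then T(0) = 1 and, for every k ≥ 1, T(k) = k + 1 + ∑_{i=1}^{k} i·T(k−i); equivalently, T(k) = S(k) for all k, where S(0) = 1 and S(k) = k + 1 + ∑_{i=1}^{k} i·S(k−i). -/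
/-
A set is parity-alternating iff each element `p` has the parity of its rank `#{q ∈ P | q ≤ p}`.
In this form, deleting the top element `n + 1` is transparent: a parity-alternating
`P ⊆ [1, n + 1]` either avoids `n + 1`, or is `P' ∪ {n + 1}` with `P'` parity-alternating
in `[1, n]` and `#P' ≡ n (mod 2)`. So the sets with `#P ≡ n` and with `#P ≢ n` are counted
by `fib (n + 1)` and `fib n`, whence `T(k) = fib (2k + 2)`. The recurrence for `T` is then the
Fibonacci identity `∑_{m<k} (k - m) F_{2m+2} = F_{2k+2} - k - 1`, obtained by summing
`∑_{m<n} F_{2m+2} = F_{2n+1} - 1` over `n ≤ k`.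
-/

/-- A finite set `P ⊆ {1, …, n}` is *parity-alternating* if, listing its elements in
increasing order as `p₁ < p₂ < ⋯ < p_m`, one has `p_j ≡ j (mod 2)` for every `j`
(so `p₁` is odd, `p₂` is even, and so on). -/
def ParityAlternating (n : ℕ) (P : Finset ℕ) : Prop :=
  P ⊆ Finset.Icc 1 n ∧
    ∀ j : Fin (P.sort (· ≤ ·)).length, (P.sort (· ≤ ·)).get j % 2 = (j.val + 1) % 2

/-- The number of parity-alternating subsets of `{1, …, 2k+1}` of odd cardinality. -/
noncomputable def Tcount (k : ℕ) : ℕ :=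
  Nat.card {P : Finset ℕ // ParityAlternating (2 * k + 1) P ∧ Odd P.card}

open Finset

theorem Finset.card_filter_lt_orderEmbOfFin {α : Type*} [LinearOrder α] (s : Finset α) {k : ℕ}
    (h : #s = k) (i : Fin k) : #{x ∈ s | x < s.orderEmbOfFin h i} = i := by
  have hbelow :
      {x ∈ s | x < s.orderEmbOfFin h i} = (Iio i).map (s.orderEmbOfFin h).toEmbedding := by
    ext x
    simp only [mem_filter, mem_map, mem_Iio, RelEmbedding.coe_toEmbedding]
    constructor
    · rintro ⟨hx, hlt⟩
      obtain ⟨j, rfl⟩ : x ∈ Set.range (s.orderEmbOfFin h) := by simpa using hx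
      exact ⟨j, by simpa using hlt, rfl⟩
    · rintro ⟨j, hj, rfl⟩
      exact ⟨orderEmbOfFin_mem s h j, by simpa using hj⟩
  rw [hbelow, card_map, Fin.card_Iio]

theorem parityAlternating_iff {n : ℕ} {P : Finset ℕ} :
    ParityAlternating n P ↔
      P ⊆ Icc 1 n ∧ ∀ p ∈ P, p % 2 = (#{q ∈ P | q < p} + 1) % 2 := by
  refine and_congr_right fun _ => ?_
  set e := P.orderEmbOfFin (length_sort (· ≤ ·)).symm
  have he : ∀ j, (P.sort (· ≤ ·)).get j = e j := fun _ => rfl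
  simp only [he]
  constructor
  · intro h p hp
    obtain ⟨j, rfl⟩ : p ∈ Set.range e := by simpa [e] using hp
    rw [h j, card_filter_lt_orderEmbOfFin]
  · intro h j
    rw [h _ (orderEmbOfFin_mem _ _ j), card_filter_lt_orderEmbOfFin]

theorem subset_Icc_succ_iff_of_notMem {n : ℕ} {P : Finset ℕ} (h : n + 1 ∉ P) :
    P ⊆ Icc 1 (n + 1) ↔ P ⊆ Icc 1 n := by
  rw [← insert_Icc_right_eq_Icc_add_one (by omega), subset_insert_iff_of_notMem h]

theorem ParityAlternating.succ_notMem {n : ℕ} {P : Finset ℕ} (hP : ParityAlternating n P) :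
    n + 1 ∉ P := fun h => by simpa using hP.1 h

theorem parityAlternating_succ_iff_of_notMem {n : ℕ} {P : Finset ℕ} (h : n + 1 ∉ P) :
    ParityAlternating (n + 1) P ↔ ParityAlternating n P := by
  simp only [parityAlternating_iff, subset_Icc_succ_iff_of_notMem h]

theorem parityAlternating_succ_insert_iff {n : ℕ} {P : Finset ℕ} (h : n + 1 ∉ P) :
    ParityAlternating (n + 1) (insert (n + 1) P) ↔ ParityAlternating n P ∧ Even (#P + n) := by
  rw [parityAlternating_iff, parityAlternating_iff, insert_subset_iff,
    subset_Icc_succ_iff_of_notMem h, and_iff_right (right_mem_Icc.mpr (by omega)), and_assoc]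
  refine and_congr_right fun hP => ?_
  have hlt : ∀ p ∈ P, p < n + 1 := fun p hp => Nat.lt_succ_of_le (mem_Icc.mp (hP hp)).2
  have htop : {q ∈ insert (n + 1) P | q < n + 1} = P := by
    rw [filter_insert, if_neg (lt_irrefl _), filter_true_of_mem hlt]
  have hrank : ∀ p ∈ P, {q ∈ insert (n + 1) P | q < p} = {q ∈ P | q < p} := fun p hp => by
    rw [filter_insert, if_neg (by simpa using (hlt p hp).le)]
  rw [forall_mem_insert, htop, and_comm, Nat.even_iff]
  refine and_congr (forall₂_congr fun p hp => by rw [hrank p hp]) ?_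
  omega

instance (n : ℕ) : DecidablePred (ParityAlternating n) := fun _ => by
  unfold ParityAlternating; infer_instance

def parityAlternatingSets (n : ℕ) : Finset (Finset ℕ) :=
  {P ∈ (Icc 1 n).powerset | ParityAlternating n P}

theorem mem_parityAlternatingSets {n : ℕ} {P : Finset ℕ} :
    P ∈ parityAlternatingSets n ↔ ParityAlternating n P := by
  simp only [parityAlternatingSets, mem_filter, mem_powerset, and_iff_right_iff_imp]
  exact And.left

theorem card_filter_parityAlternatingSets_succ (n : ℕ) (Q : Finset ℕ → Prop)
    [DecidablePred Q] :
    #{P ∈ parityAlternatingSets (n + 1) | Q P} =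
      #{P ∈ parityAlternatingSets n | Q P} +
        #{P ∈ parityAlternatingSets n | Even (#P + n) ∧ Q (insert (n + 1) P)} := by
  rw [← card_filter_add_card_filter_not (p := fun P => n + 1 ∉ P), filter_filter, filter_filter]
  congr 1
  · congr 1
    ext P
    simp only [mem_filter, mem_parityAlternatingSets]
    constructor
    · rintro ⟨hP, hQ, h⟩
      exact ⟨(parityAlternating_succ_iff_of_notMem h).mp hP, hQ⟩
    · rintro ⟨hP, hQ⟩
      exact ⟨(parityAlternating_succ_iff_of_notMem hP.succ_notMem).mpr hP, hQ, hP.succ_notMem⟩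
  · apply card_nbij' (·.erase (n + 1)) (insert (n + 1))
    all_goals intro P hP; simp only [coe_filter, mem_parityAlternatingSets, not_not,
      Set.mem_ofPred_eq] at hP ⊢
    · obtain ⟨hP, hQ, h⟩ := hP
      rw [← insert_erase h, parityAlternating_succ_insert_iff (notMem_erase _ _)] at hP
      rw [← insert_erase h] at hQ
      exact ⟨hP.1, hP.2, hQ⟩
    · obtain ⟨hP, hEven, hQ⟩ := hP
      exact ⟨(parityAlternating_succ_insert_iff hP.succ_notMem).mpr ⟨hP, hEven⟩, hQ,
        mem_insert_self _ _⟩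
    · exact insert_erase hP.2.2
    · exact erase_insert hP.1.succ_notMem

theorem parityAlternatingSets_zero : parityAlternatingSets 0 = {∅} := by
  ext P
  simp +contextual [mem_parityAlternatingSets, parityAlternating_iff]

theorem card_parityAlternatingSets_parity (n : ℕ) :
    #{P ∈ parityAlternatingSets n | Even (#P + n)} = Nat.fib (n + 1) ∧
      #{P ∈ parityAlternatingSets n | ¬Even (#P + n)} = Nat.fib n := by
  induction n with
  | zero => simp [parityAlternatingSets_zero, filter_singleton]
  | succ n ih =>
    have hcard : ∀ P ∈ parityAlternatingSets n, #(insert (n + 1) P) = #P + 1 := fun P hP =>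
      card_insert_of_notMem (mem_parityAlternatingSets.mp hP).succ_notMem
    simp only [card_filter_parityAlternatingSets_succ, Nat.fib_add_two, ← ih.1, ← ih.2]
    constructor
    · congr 1
      · exact congrArg card (filter_congr fun P _ => by grind)
      · exact congrArg card (filter_congr fun P hP => by rw [hcard P hP]; grind)
    · rw [← add_zero #{P ∈ parityAlternatingSets n | Even (#P + n)}]
      congr 1
      · exact congrArg card (filter_congr fun P _ => by grind)
      · exact card_eq_zero.mpr (filter_false_of_mem fun P hP => by rw [hcard P hP]; grind)

theorem tcount_eq_fib (k : ℕ) : Tcount k = Nat.fib (2 * k + 2) := by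
  have hmem : ∀ P, ParityAlternating (2 * k + 1) P ∧ Odd #P ↔
      P ∈ {P ∈ parityAlternatingSets (2 * k + 1) | Even (#P + (2 * k + 1))} := fun P => by
    rw [mem_filter, mem_parityAlternatingSets]
    grind
  rw [Tcount, Nat.card_congr (Equiv.subtypeEquivRight hmem), Nat.card_eq_finsetCard,
    (card_parityAlternatingSets_parity _).1]

theorem sum_range_fib_two_mul_add_two (n : ℕ) :
    ∑ m ∈ range n, Nat.fib (2 * m + 2) + 1 = Nat.fib (2 * n + 1) := by
  induction n with
  | zero => simp
  | succ n ih =>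
    rw [sum_range_succ, add_right_comm, ih, show 2 * (n + 1) + 1 = 2 * n + 1 + 2 by ring,
      Nat.fib_add_two (n := 2 * n + 1)]

theorem fib_two_mul_add_two_eq_add_sum (k : ℕ) :
    Nat.fib (2 * k + 2) = k + 1 + ∑ m ∈ range k, (k - m) * Nat.fib (2 * m + 2) := by
  induction k with
  | zero => simp
  | succ k ih =>
    have hweights : ∑ m ∈ range (k + 1), (k + 1 - m) * Nat.fib (2 * m + 2) =
        ∑ m ∈ range k, (k - m) * Nat.fib (2 * m + 2) +
          ∑ m ∈ range (k + 1), Nat.fib (2 * m + 2) := by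
      have hstep : ∀ m ∈ range (k + 1),
          (k + 1 - m) * Nat.fib (2 * m + 2) = (k - m) * Nat.fib (2 * m + 2) + Nat.fib (2 * m + 2) :=
        fun m hm => by rw [Nat.sub_add_comm (mem_range_succ_iff.mp hm), add_one_mul]
      rw [sum_congr rfl hstep, sum_add_distrib, sum_range_succ (fun m => (k - m) * _), Nat.sub_self,
        zero_mul, add_zero]
    rw [hweights, show 2 * (k + 1) + 2 = 2 * k + 2 + 2 by ring, Nat.fib_add_two, ih,
      show 2 * k + 2 + 1 = 2 * (k + 1) + 1 by ring, ← sum_range_fib_two_mul_add_two]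
    ring

theorem sum_Icc_mul_sub_eq_sum_range (f : ℕ → ℕ) (k : ℕ) :
    ∑ i ∈ Icc 1 k, i * f (k - i) = ∑ m ∈ range k, (k - m) * f m := by
  refine sum_nbij' (k - ·) (k - ·) ?_ ?_ ?_ ?_ ?_ <;> intro i hi <;>
    simp only [mem_Icc, mem_range] at hi ⊢ <;> grind

theorem eq_of_recurrence {S T : ℕ → ℕ} (h0 : S 0 = T 0)
    (hS : ∀ k, 1 ≤ k → S k = k + 1 + ∑ i ∈ Icc 1 k, i * S (k - i))
    (hT : ∀ k, 1 ≤ k → T k = k + 1 + ∑ i ∈ Icc 1 k, i * T (k - i)) : S = T := by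
  funext k
  induction k using Nat.strong_induction_on with
  | _ k ih =>
    rcases Nat.eq_zero_or_pos k with rfl | hk
    · exact h0
    · rw [hS k hk, hT k hk]
      refine congrArg _ (sum_congr rfl fun i hi => ?_)
      rw [ih (k - i) (by grind)]

theorem stmt_11 :
    (Tcount 0 = 1 ∧
      ∀ k, 1 ≤ k → Tcount k = k + 1 + ∑ i ∈ Finset.Icc 1 k, i * Tcount (k - i)) ∧
    ∀ S : ℕ → ℕ, S 0 = 1 →
      (∀ k, 1 ≤ k → S k = k + 1 + ∑ i ∈ Finset.Icc 1 k, i * S (k - i)) →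
      ∀ k, Tcount k = S k := by
  have hT0 : Tcount 0 = 1 := by rw [tcount_eq_fib, Nat.fib_two]
  have hT : ∀ k, Tcount k = k + 1 + ∑ i ∈ Icc 1 k, i * Tcount (k - i) := fun k => by
    rw [sum_Icc_mul_sub_eq_sum_range Tcount]
    simp only [tcount_eq_fib]
    exact fib_two_mul_add_two_eq_add_sum k
  exact ⟨⟨hT0, fun k _ => hT k⟩, fun S hS0 hS =>
    congrFun (eq_of_recurrence (hT0.trans hS0.symm) (fun k _ => hT k) hS)⟩
end

section
/- Call a finite subset P of {1, 2, ..., n} parity-alternating if, when its elements are listed in increasing order p_1 < p_2 < ... < p_m, one has p_j ≡ j (mod 2) for every j (so p_1 is odd, p_2 is even, and so on). For each k ≥ 0, let M(k) be the number of parity-alternating subsets of {1, 2, ..., 2k} of even cardinality (including the empty set). Then M(0) = 1 and, for every k ≥ 1, M(k) = 1 + ∑_{i=1}^{k} i·M(k−i); equivalently, M(k) = N(k) for all k, where N(0) = 1 and N(k) = 1 + ∑_{i=1}^{k} i·N(k−i). -/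
/-- The number of parity-alternating subsets of `{1, …, 2k}` of even cardinality
(including the empty set). -/
noncomputable def Mcount (k : ℕ) : ℕ :=
  Nat.card {P : Finset ℕ // ParityAlternating (2 * k) P ∧ Even P.card}

open Finset

def IsEvenAltList (n : ℕ) (l : List ℕ) : Prop :=
  l.Pairwise (· < ·) ∧ (∀ x ∈ l, x ≤ n) ∧
    (∀ i (hi : i < l.length), l[i] % 2 = (i + 1) % 2) ∧ Even l.length

namespace IsEvenAltList

theorem nil (n : ℕ) : IsEvenAltList n [] :=
  ⟨.nil, by simp, by simp, ⟨0, rfl⟩⟩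

theorem pos {n : ℕ} {l : List ℕ} (h : IsEvenAltList n l) {x : ℕ} (hx : x ∈ l) : 0 < x := by
  obtain ⟨i, hi, rfl⟩ := List.getElem_of_mem hx
  rcases Nat.eq_zero_or_pos i with rfl | hi0
  · have := h.2.2.1 0 hi
    omega
  · exact (Nat.zero_le _).trans_lt (List.pairwise_iff_getElem.1 h.1 0 i (by omega) hi hi0)

theorem cons_cons_iff {n x y : ℕ} {t : List ℕ} :
    IsEvenAltList n (x :: y :: t) ↔
      x % 2 = 1 ∧ y % 2 = 0 ∧ x < y ∧ y ≤ n ∧ (∀ z ∈ t, y < z) ∧ IsEvenAltList n t := by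
  have parity : (∀ i (hi : i < (x :: y :: t).length), (x :: y :: t)[i] % 2 = (i + 1) % 2) ↔
      x % 2 = 1 ∧ y % 2 = 0 ∧ ∀ i (hi : i < t.length), t[i] % 2 = (i + 1) % 2 := by
    refine ⟨fun h => ⟨h 0 (by simp), h 1 (by simp), fun i hi => ?_⟩, ?_⟩
    · have := h (i + 2) (by simpa using hi)
      simp only [List.getElem_cons_succ] at this
      omega
    · rintro ⟨hx, hy, ht⟩ (_ | _ | i) hi
      · simpa using hx
      · simpa using hy
      · have := ht i (by simpa using hi)
        simp only [List.getElem_cons_succ]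
        omega
  unfold IsEvenAltList
  rw [parity]
  simp only [List.pairwise_cons, List.mem_cons, forall_eq_or_imp,
    List.length_cons, Nat.even_add_one, not_not]
  constructor
  · rintro ⟨⟨⟨hxy, -⟩, hyt, ht⟩, ⟨-, hyn, htn⟩, ⟨hx, hy, hpt⟩, he⟩
    exact ⟨hx, hy, hxy, hyn, hyt, ht, htn, hpt, he⟩
  · rintro ⟨hx, hy, hxy, hyn, hyt, ht, htn, hpt, he⟩
    refine ⟨⟨⟨hxy, fun z hz => hxy.trans (hyt z hz)⟩, hyt, ht⟩, ⟨hxy.le.trans hyn, hyn, htn⟩,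
      ⟨hx, hy, hpt⟩, he⟩

theorem map_add_iff {n c : ℕ} (hc : Even c) {l : List ℕ} :
    IsEvenAltList (n + c) (l.map (· + c)) ↔ IsEvenAltList n l := by
  have hc2 : c % 2 = 0 := Nat.even_iff.1 hc
  simp only [IsEvenAltList, List.pairwise_map, List.mem_map, forall_exists_index, and_imp,
    forall_apply_eq_imp_iff₂, List.length_map, List.getElem_map, add_le_add_iff_right,
    add_lt_add_iff_right, Nat.add_mod _ c, hc2, add_zero, Nat.mod_mod]

theorem cons_cons_map_add_iff {n x y : ℕ} {t : List ℕ} :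
    IsEvenAltList n (x :: y :: t.map (· + y)) ↔
      x % 2 = 1 ∧ y % 2 = 0 ∧ x < y ∧ y ≤ n ∧ IsEvenAltList (n - y) t := by
  rw [cons_cons_iff]
  constructor
  · rintro ⟨hx, hy, hxy, hyn, -, ht⟩
    rw [← Nat.sub_add_cancel hyn, map_add_iff (Nat.even_iff.2 hy)] at ht
    exact ⟨hx, hy, hxy, hyn, ht⟩
  · rintro ⟨hx, hy, hxy, hyn, ht⟩
    refine ⟨hx, hy, hxy, hyn, ?_, ?_⟩
    · simp only [List.mem_map]
      rintro _ ⟨z, hz, rfl⟩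
      have := ht.pos hz
      omega
    · rwa [← Nat.sub_add_cancel hyn, map_add_iff (Nat.even_iff.2 hy)]

end IsEvenAltList

theorem Finset.sort_injective {α : Type*} [LinearOrder α] :
    Function.Injective (fun s : Finset α => s.sort) := fun s t h => by
  rw [← s.sort_toFinset (· ≤ ·), ← t.sort_toFinset (· ≤ ·)]
  exact congrArg List.toFinset h

theorem parityAlternating_and_even_iff {n : ℕ} {P : Finset ℕ} :
    ParityAlternating n P ∧ Even P.card ↔ IsEvenAltList n P.sort := by
  constructor
  · rintro ⟨⟨hsub, hpar⟩, heven⟩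
    refine ⟨(sortedLT_sort P).pairwise, fun x hx => ?_, fun i hi => hpar ⟨i, hi⟩, by
      rwa [length_sort]⟩
    exact (mem_Icc.1 (hsub ((mem_sort _).1 hx))).2
  · intro h
    refine ⟨⟨fun x hx => ?_, fun j => h.2.2.1 j j.2⟩, by simpa using h.2.2.2⟩
    have hx' : x ∈ P.sort := (mem_sort _).2 hx
    exact mem_Icc.2 ⟨h.pos hx', h.2.1 x hx'⟩

open scoped Classical in
noncomputable def evenAltSets (k : ℕ) : Finset (Finset ℕ) :=
  {P ∈ (Icc 1 (2 * k)).powerset | ParityAlternating (2 * k) P ∧ Even P.card}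

theorem mem_evenAltSets {k : ℕ} {P : Finset ℕ} :
    P ∈ evenAltSets k ↔ IsEvenAltList (2 * k) P.sort := by
  simp only [evenAltSets, mem_filter, mem_powerset, ← parityAlternating_and_even_iff]
  exact ⟨And.right, fun h => ⟨h.1.1, h⟩⟩

theorem Mcount_eq_card (k : ℕ) : Mcount k = #(evenAltSets k) := by
  rw [Mcount, ← Nat.card_eq_finsetCard]
  exact Nat.card_congr (Equiv.subtypeEquivRight fun P =>
    (parityAlternating_and_even_iff.trans mem_evenAltSets.symm))

def prependPair (x y : ℕ) (Q : Finset ℕ) : Finset ℕ :=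
  insert x (insert y (Q.map (addRightEmbedding y)))

theorem sort_prependPair {x y : ℕ} {Q : Finset ℕ} (hxy : x < y) (hQ : ∀ q ∈ Q, 0 < q) :
    (prependPair x y Q).sort = x :: y :: Q.sort.map (· + y) := by
  have hshift : ∀ z ∈ Q.map (addRightEmbedding y), y < z := by
    simp only [mem_map, addRightEmbedding_apply]
    rintro _ ⟨q, hq, rfl⟩
    have := hQ q hq
    omega
  have hsort : (Q.map (addRightEmbedding y)).sort = Q.sort.map (· + y) :=
    (StrictMonoOn.map_finsetSort (addRightEmbedding y) Q fun a _ b _ hab => by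
      simpa using hab).symm
  rw [prependPair, sort_insert, sort_insert, hsort]
  · exact fun z hz => (hshift z hz).le
  · exact fun hy => (hshift y hy).false
  · simp only [mem_insert, forall_eq_or_imp]
    exact ⟨hxy.le, fun z hz => (hxy.trans (hshift z hz)).le⟩
  · simp only [mem_insert, not_or]
    exact ⟨hxy.ne, fun hx => (hxy.trans (hshift x hx)).false⟩

theorem prependPair_inj {x y x' y' : ℕ} {Q Q' : Finset ℕ} (hxy : x < y) (hxy' : x' < y')
    (hQ : ∀ q ∈ Q, 0 < q) (hQ' : ∀ q ∈ Q', 0 < q)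
    (h : prependPair x y Q = prependPair x' y' Q') : x = x' ∧ y = y' ∧ Q = Q' := by
  have hs := congrArg Finset.sort h
  rw [sort_prependPair hxy hQ, sort_prependPair hxy' hQ', List.cons.injEq, List.cons.injEq] at hs
  obtain ⟨rfl, rfl, hmap⟩ := hs
  exact ⟨rfl, rfl, sort_injective (List.map_injective_iff.2 (add_left_injective y) hmap)⟩

theorem prependPair_mem_evenAltSets {k a b : ℕ} {Q : Finset ℕ} (ha : 1 ≤ a) (hab : a ≤ b)
    (hbk : b ≤ k) (hQ : Q ∈ evenAltSets (k - b)) :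
    prependPair (2 * a - 1) (2 * b) Q ∈ evenAltSets k := by
  rw [mem_evenAltSets] at hQ ⊢
  rw [sort_prependPair (by omega) fun q hq => hQ.pos ((mem_sort _).2 hq),
    IsEvenAltList.cons_cons_map_add_iff]
  refine ⟨by omega, by omega, by omega, by omega, ?_⟩
  rwa [← Nat.mul_sub]

theorem exists_prependPair_eq_of_mem_evenAltSets {k : ℕ} {P : Finset ℕ}
    (hP : P ∈ evenAltSets k) (hP0 : P ≠ ∅) :
    ∃ b a Q, ((1 ≤ b ∧ b ≤ k) ∧ (1 ≤ a ∧ a ≤ b) ∧ Q ∈ evenAltSets (k - b)) ∧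
      prependPair (2 * a - 1) (2 * b) Q = P := by
  rw [mem_evenAltSets] at hP
  rcases hsort : P.sort with _ | ⟨x, _ | ⟨y, t⟩⟩
  · exact absurd (sort_injective (hsort.trans (sort_empty _).symm)) hP0
  · rw [hsort] at hP
    exact absurd hP.2.2.2 Nat.not_even_one
  rw [hsort] at hP
  set t' := t.map (· - y)
  have ht : t = t'.map (· + y) := by
    rw [List.map_map]
    refine (List.map_congr_left fun z hz => ?_).trans (List.map_id t) |>.symm
    have := (IsEvenAltList.cons_cons_iff.1 hP).2.2.2.2.1 z hz
    simp only [Function.comp_apply, id_eq]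
    omega
  rw [ht, IsEvenAltList.cons_cons_map_add_iff] at hP
  obtain ⟨hx, hy, hxy, hyk, ht'⟩ := hP
  have hQsort : t'.toFinset.sort = t' :=
    (List.toFinset_sort _ ht'.1.nodup).2 (ht'.1.imp le_of_lt)
  have hx' : 2 * ((x + 1) / 2) - 1 = x := by omega
  have hy' : 2 * (y / 2) = y := by omega
  refine ⟨y / 2, (x + 1) / 2, t'.toFinset, ⟨⟨by omega, by omega⟩, ⟨by omega, by omega⟩, ?_⟩,
    sort_injective ?_⟩
  · rwa [mem_evenAltSets, hQsort, Nat.mul_sub, hy']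
  · simp only [hx', hy']
    rw [sort_prependPair hxy fun q hq => ht'.pos (List.mem_toFinset.1 hq), hQsort, hsort, ht]

theorem evenAltSets_eq (k : ℕ) :
    evenAltSets k = insert ∅ (((Icc 1 k).sigma fun b => Icc 1 b ×ˢ evenAltSets (k - b)).image
      fun p => prependPair (2 * p.2.1 - 1) (2 * p.1) p.2.2) := by
  ext P
  simp only [mem_insert, mem_image, mem_sigma, mem_product, mem_Icc, Sigma.exists, Prod.exists]
  constructor
  · intro hP
    rcases eq_or_ne P ∅ with rfl | hP0
    · exact .inl rfl
    · exact .inr (exists_prependPair_eq_of_mem_evenAltSets hP hP0)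
  · rintro (rfl | ⟨b, a, Q, ⟨⟨-, hbk⟩, ⟨ha, hab⟩, hQ⟩, rfl⟩)
    · rw [mem_evenAltSets, sort_empty]
      exact .nil _
    · exact prependPair_mem_evenAltSets ha hab hbk hQ

theorem card_evenAltSets (k : ℕ) :
    #(evenAltSets k) = 1 + ∑ b ∈ Icc 1 k, b * #(evenAltSets (k - b)) := by
  have hpos {j : ℕ} {Q : Finset ℕ} (hQ : Q ∈ evenAltSets j) : ∀ q ∈ Q, 0 < q :=
    fun q hq => (mem_evenAltSets.1 hQ).pos ((mem_sort _).2 hq)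
  rw [evenAltSets_eq, card_insert_of_notMem, card_image_of_injOn, card_sigma, add_comm]
  · congr 1
    refine sum_congr rfl fun b _ => ?_
    rw [card_product, Nat.card_Icc, Nat.add_sub_cancel]
  · rintro ⟨b, a, Q⟩ hp ⟨b', a', Q'⟩ hp' h
    simp only [coe_sigma, Set.mem_sigma_iff, coe_Icc, Set.mem_Icc, coe_product,
      Set.mem_prod, mem_coe] at hp hp' h
    obtain ⟨ha, hb, rfl⟩ := prependPair_inj (by omega) (by omega) (hpos hp.2.2) (hpos hp'.2.2) h
    obtain rfl : b = b' := by omega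
    obtain rfl : a = a' := by omega
    rfl
  · simp only [mem_image, not_exists, not_and]
    exact fun _ _ => insert_ne_empty _ _

theorem stmt_12 :
    (Mcount 0 = 1 ∧
      ∀ k, 1 ≤ k → Mcount k = 1 + ∑ i ∈ Finset.Icc 1 k, i * Mcount (k - i)) ∧
    ∀ N : ℕ → ℕ, N 0 = 1 →
      (∀ k, 1 ≤ k → N k = 1 + ∑ i ∈ Finset.Icc 1 k, i * N (k - i)) →
      ∀ k, Mcount k = N k := by
  have hrec (k : ℕ) : Mcount k = 1 + ∑ i ∈ Icc 1 k, i * Mcount (k - i) := by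
    simp only [Mcount_eq_card, card_evenAltSets k]
  refine ⟨⟨by simpa using hrec 0, fun k _ => hrec k⟩, fun N hN0 hN k => ?_⟩
  induction k using Nat.strong_induction_on with
  | _ k ih =>
    rcases Nat.eq_zero_or_pos k with rfl | hk
    · simpa [hN0] using hrec 0
    rw [hrec k, hN k hk]
    refine congrArg _ (sum_congr rfl fun i hi => ?_)
    rw [ih (k - i) (by have := (mem_Icc.1 hi).1; omega)]
end

section
/- Call a finite subset P of {1, 2, ..., n} parity-alternating if, when its elements are listed in increasing order p_1 < p_2 < ... < p_m, one has p_j ≡ j (mod 2) for every j. Then for every k ≥ 0, the number of parity-alternating subsets of {1, 2, ..., 2k} of even cardinality (including the empty set) is odd if and only if k mod 3 ≠ 1. -/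
open Finset

theorem Finset.card_filter_le_orderEmbOfFin {α : Type*} [LinearOrder α] (s : Finset α) {k : ℕ}
    (h : #s = k) (i : Fin k) : #{y ∈ s | y ≤ s.orderEmbOfFin h i} = i + 1 := by
  have : {y ∈ s | y ≤ s.orderEmbOfFin h i} = (Iic i).map (s.orderEmbOfFin h).toEmbedding := by
    ext y
    simp only [mem_filter, mem_map, mem_Iic, RelEmbedding.coe_toEmbedding]
    constructor
    · rintro ⟨hy, hle⟩
      obtain ⟨j, rfl⟩ : y ∈ Set.range (s.orderEmbOfFin h) := by simpa using hy
      exact ⟨j, by simpa using hle, rfl⟩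
    · rintro ⟨j, hj, rfl⟩
      simpa using hj
  rw [this, card_map, Fin.card_Iic]

def RankParity (P : Finset ℕ) : Prop :=
  ∀ x ∈ P, x % 2 = #{y ∈ P | y ≤ x} % 2

instance : DecidablePred RankParity := fun P => inferInstanceAs (Decidable (∀ x ∈ P, _))

theorem parityAlternating_iff_s14 {n : ℕ} {P : Finset ℕ} :
    ParityAlternating n P ↔ P ⊆ Icc 1 n ∧ RankParity P := by
  have hlen : #P = (P.sort (· ≤ ·)).length := (length_sort _).symm
  have hget (j) : (P.sort (· ≤ ·)).get j = P.orderEmbOfFin hlen j := rfl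
  refine and_congr_right fun _ => ⟨fun h x hx => ?_, fun h j => ?_⟩
  · obtain ⟨j, rfl⟩ : x ∈ Set.range (P.orderEmbOfFin hlen) := by simpa using hx
    rw [card_filter_le_orderEmbOfFin, ← h j, hget]
  · rw [hget, h _ (orderEmbOfFin_mem _ _ _), card_filter_le_orderEmbOfFin]

theorem rankParity_insert_iff {A : Finset ℕ} {m : ℕ} (hA : ∀ x ∈ A, x < m) :
    RankParity (insert m A) ↔ RankParity A ∧ m % 2 = (#A + 1) % 2 := by
  have hm : m ∉ A := fun h => (hA m h).false
  have below (x) (hx : x ∈ A) : {y ∈ insert m A | y ≤ x} = {y ∈ A | y ≤ x} := by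
    rw [filter_insert, if_neg (hA x hx).not_ge]
  have top : {y ∈ insert m A | y ≤ m} = insert m A :=
    filter_true_of_mem fun y hy => (mem_insert.1 hy).elim le_of_eq fun hy => (hA y hy).le
  simp only [RankParity, forall_mem_insert, top, card_insert_of_notMem hm]
  refine ⟨fun ⟨htop, h⟩ => ⟨fun x hx => ?_, htop⟩, fun ⟨h, htop⟩ => ⟨htop, fun x hx => ?_⟩⟩
  all_goals rw [h x hx, below x hx]

def rankParityCount (n r : ℕ) : ℕ :=
  #{P ∈ (Icc 1 n).powerset | RankParity P ∧ #P % 2 = r}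

theorem rankParityCount_succ (n : ℕ) {r : ℕ} (hr : r < 2) :
    rankParityCount (n + 1) r =
      rankParityCount n r + if (n + 1) % 2 = r then rankParityCount n (1 - r) else 0 := by
  have lt_of_sub {A : Finset ℕ} (hA : A ∈ (Icc 1 n).powerset) : ∀ x ∈ A, x < n + 1 :=
    fun x hx => Nat.lt_succ_of_le (mem_Icc.1 (mem_powerset.1 hA hx)).2
  have notMem {A : Finset ℕ} (hA : A ∈ (Icc 1 n).powerset) : n + 1 ∉ A :=
    fun h => (lt_of_sub hA _ h).false
  have hinj : Set.InjOn (insert (n + 1)) ((Icc 1 n).powerset : Set (Finset ℕ)) :=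
    fun A hA B hB hAB => by rw [← erase_insert (notMem hA), hAB, erase_insert (notMem hB)]
  have hdisj : Disjoint (Icc 1 n).powerset ((Icc 1 n).powerset.image (insert (n + 1))) :=
    disjoint_left.2 fun A hA hA' => by
      obtain ⟨B, -, rfl⟩ := mem_image.1 hA'
      exact notMem hA (mem_insert_self _ _)
  rw [rankParityCount, ← insert_Icc_right_eq_Icc_add_one (by omega), powerset_insert,
    filter_union, card_union_of_disjoint (disjoint_filter_filter hdisj), filter_image,
    card_image_of_injOn (hinj.mono (filter_subset _ _))]
  congr 1
  split_ifs with hpar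
  · refine congrArg card (filter_congr fun A hA => ?_)
    rw [rankParity_insert_iff (lt_of_sub hA), card_insert_of_notMem (notMem hA), and_assoc]
    exact and_congr_right fun _ => by omega
  · refine card_eq_zero.2 (filter_false_of_mem fun A hA => ?_)
    rw [rankParity_insert_iff (lt_of_sub hA), card_insert_of_notMem (notMem hA)]
    rintro ⟨⟨-, htop⟩, hcard⟩
    omega

theorem rankParityCount_two_mul_add_two (k : ℕ) :
    rankParityCount (2 * k + 2) 0 = 2 * rankParityCount (2 * k) 0 + rankParityCount (2 * k) 1 ∧
      rankParityCount (2 * k + 2) 1 = rankParityCount (2 * k) 0 + rankParityCount (2 * k) 1 := by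
  have odd0 : rankParityCount (2 * k + 1) 0 = rankParityCount (2 * k) 0 := by
    rw [rankParityCount_succ _ zero_lt_two, if_neg (by omega), add_zero]
  have odd1 : rankParityCount (2 * k + 1) 1 =
      rankParityCount (2 * k) 1 + rankParityCount (2 * k) 0 := by
    rw [rankParityCount_succ _ one_lt_two, if_pos (by omega), Nat.sub_self]
  have even0 : rankParityCount (2 * k + 2) 0 =
      rankParityCount (2 * k + 1) 0 + rankParityCount (2 * k + 1) 1 := by
    rw [rankParityCount_succ _ zero_lt_two, if_pos (by omega), Nat.sub_zero]
  have even1 : rankParityCount (2 * k + 2) 1 = rankParityCount (2 * k + 1) 1 := by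
    rw [rankParityCount_succ _ one_lt_two, if_neg (by omega), add_zero]
  constructor <;> omega

theorem rankParityCount_two_mul_mod_two (k : ℕ) :
    rankParityCount (2 * k) 0 % 2 = (if k % 3 = 1 then 0 else 1) ∧
      rankParityCount (2 * k) 1 % 2 = (if k % 3 = 0 then 0 else 1) := by
  induction k with
  | zero => decide
  | succ k ih =>
    obtain ⟨h0, h1⟩ := rankParityCount_two_mul_add_two k
    rw [mul_add, mul_one, h0, h1]
    split_ifs at ih ⊢ <;> omega

theorem natCard_parityAlternating_even_card (n : ℕ) :
    Nat.card {P : Finset ℕ // ParityAlternating n P ∧ Even P.card} = rankParityCount n 0 := by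
  rw [rankParityCount, ← Nat.card_eq_finsetCard]
  exact Nat.card_congr <| Equiv.subtypeEquivRight fun P => by
    simp [parityAlternating_iff_s14, Nat.even_iff, and_assoc]

theorem stmt_14 :
    ∀ k : ℕ,
      Odd (Nat.card {P : Finset ℕ // ParityAlternating (2 * k) P ∧ Even P.card}) ↔
        k % 3 ≠ 1 := by
  intro k
  rw [natCard_parityAlternating_even_card, Nat.odd_iff, (rankParityCount_two_mul_mod_two k).1]
  split_ifs <;> simp_all
end
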